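/- arXiv:2103.05182 — 2 statements merged into one kernel-verified Lean document; each statement's English description precedes it below -/
import Mathlib

section
/- Let μ be a Borel probability measure on [0,∞) with ∫ log(1+x) dμ(x) < ∞, and set p := 1 − μ({0}). If c ∈ (0,1] and c ≤ p (critical or subcritical cases), then [μ]_c = (B(c)/B(c/p)) · [μ⁺]_{c/p}. -/
open MeasureTheory Filter Topology
open scoped ENNReal

noncomputable def elogr (t : ℝ) : EReal := if t ≤ 0 then ⊥ else ((Real.log t : ℝ) : EReal)

/-- The Halász–Székely kernel, with values in `[-∞, +∞)` (`EReal`). -/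
noncomputable def hsKernel (c x y : ℝ) : EReal :=
  if c = 0 then ((Real.log y + y⁻¹ * x - 1 : ℝ) : EReal)
  else ((Real.log y : ℝ) : EReal) + ((c⁻¹ : ℝ) : EReal) * elogr (c * y⁻¹ * x + 1 - c)

/-- The nonnegative part of an extended real, as an element of `[0,∞]`. -/
noncomputable def erealToENNReal (x : EReal) : ℝ≥0∞ :=
  if x = ⊤ then ⊤ else ENNReal.ofReal x.toReal

/-- Integral of an `EReal`-valued function: positive part minus negative part. -/
noncomputable def eIntegral (μ : Measure ℝ) (f : ℝ → EReal) : EReal :=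
  ((∫⁻ x, erealToENNReal (f x) ∂μ : ℝ≥0∞) : EReal) - ((∫⁻ x, erealToENNReal (-f x) ∂μ : ℝ≥0∞) : EReal)

/-- Exponential on `EReal`, with values in `[0,∞]`. -/
noncomputable def eexp (x : EReal) : ℝ≥0∞ :=
  if x = ⊤ then ⊤ else if x = ⊥ then 0 else ENNReal.ofReal (Real.exp x.toReal)

/-- The Halász–Székely barycenter `[μ]_c ∈ [0,∞]`. -/
noncomputable def hsBary (c : ℝ) (μ : Measure ℝ) : ℝ≥0∞ :=
  eexp (⨅ y : {y : ℝ // 0 < y}, eIntegral μ (fun x => hsKernel c x y))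

/-- The function `B`. -/
noncomputable def hsB (c : ℝ) : ℝ :=
  if c = 0 then 0 else if c = 1 then 1 else c * (1 - c) ^ ((1 - c) / c)

/-- The uniform probability measure on the entries of a tuple. -/
noncomputable def unifMeasure {n : ℕ} (x : Fin n → ℝ) : Measure ℝ :=
  (n : ℝ≥0∞)⁻¹ • ∑ i, MeasureTheory.Measure.dirac (x i)

/-- The Halász–Székely mean of a tuple. -/
noncomputable def hsMean (c : ℝ) {n : ℕ} (x : Fin n → ℝ) : ℝ≥0∞ := hsBary c (unifMeasure x)

/-- The `k`-th symmetric mean of an `n`-tuple. -/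
noncomputable def symMean {n : ℕ} (k : ℕ) (x : Fin n → ℝ) : ℝ :=
  ((∑ s ∈ Finset.univ.powersetCard k, ∏ i ∈ s, x i) / (n.choose k)) ^ ((k : ℝ)⁻¹)

/-!
Write `p = μ((0,∞))` and `μ = (1 - p) δ₀ + p μ⁺`. For `0 < c < 1` the kernel is real-valued on
`[0,∞)`, and averaging it against this splitting gives, for `c < p`, the identity
`(1 - p) K(0,y,c) + p K(x,y,c) = log (B(c)/B(c/p)) + K(x,ky,c/p)` with `k = (1 - c)/(p - c)`:
the average is the kernel for `μ⁺` at parameter `c/p`, up to a constant and the rescaling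
`y ↦ ky`, which does not change the infimum over `y > 0`.
In the critical case `c = p < 1` the average is `log B(c) + log (x + ((1 - c)/c) y)`, which
decreases as `y → 0`; by monotone convergence its infimum is `∫ log x dμ⁺ = log [μ⁺]₁`, possibly
`-∞`. When `c = p = 1` there is no atom at `0` and `μ⁺ = μ`.
-/

open Real Set ProbabilityTheory

lemma eexp_coe_add (d : ℝ) (x : EReal) :
    eexp ((d : EReal) + x) = ENNReal.ofReal (exp d) * eexp x := by
  induction x using EReal.rec with
  | bot => simp [eexp]
  | top => simp [eexp, ENNReal.mul_top, exp_pos]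
  | coe r => simp [eexp, ← EReal.coe_add, exp_add, ENNReal.ofReal_mul (exp_pos d).le]

lemma EReal.coe_add_iInf {ι : Sort*} [Nonempty ι] (d : ℝ) (f : ι → EReal) :
    (⨅ i, ((d : EReal) + f i)) = (d : EReal) + ⨅ i, f i := by
  have hcont : ContinuousAt (fun x : EReal => (d : EReal) + x) (⨅ i, f i) :=
    (EReal.continuousAt_add (p := ((d : EReal), ⨅ i, f i)) (by simp) (by simp)).comp
      (continuousAt_const.prodMk continuousAt_id)
  exact (Monotone.map_iInf_of_continuousAt hcont (fun _ _ h => add_le_add_right h _)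
    (by simp)).symm

lemma iInf_pos_comp_mul {k : ℝ} (hk : 0 < k) (G : ℝ → EReal) :
    (⨅ y : {y : ℝ // 0 < y}, G (k * y)) = ⨅ y : {y : ℝ // 0 < y}, G y :=
  Function.Surjective.iInf_comp (f := fun y : {y : ℝ // 0 < y} => ⟨k * y, mul_pos hk y.2⟩)
    (fun z : {y : ℝ // 0 < y} => ⟨⟨k⁻¹ * z, mul_pos (inv_pos.2 hk) z.2⟩, Subtype.ext (by
      field_simp)⟩) (fun y => G y)

section eIntegral

variable {μ : Measure ℝ}

lemma eIntegral_congr_ae {f g : ℝ → EReal} (h : f =ᵐ[μ] g) : eIntegral μ f = eIntegral μ g := by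
  unfold eIntegral
  congr 2 <;> exact lintegral_congr_ae (h.mono fun x hx => by simp only [hx])

lemma eIntegral_coe (f : ℝ → ℝ) :
    eIntegral μ (fun x => (f x : EReal)) =
      ((∫⁻ x, ENNReal.ofReal (f x) ∂μ : ℝ≥0∞) : EReal) -
        ((∫⁻ x, ENNReal.ofReal (-f x) ∂μ : ℝ≥0∞) : EReal) := by
  simp [eIntegral, erealToENNReal, ← EReal.coe_neg]

lemma eIntegral_coe_of_integrable {f : ℝ → ℝ} (hf : Integrable f μ) :
    eIntegral μ (fun x => (f x : EReal)) = ((∫ x, f x ∂μ : ℝ) : EReal) := by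
  have hn : ∫⁻ x, ENNReal.ofReal (-f x) ∂μ ≠ ∞ := hf.neg.lintegral_lt_top.ne
  rw [eIntegral_coe, integral_eq_lintegral_pos_part_sub_lintegral_neg_part hf, EReal.coe_sub,
    EReal.coe_ennreal_toReal hf.lintegral_lt_top.ne, EReal.coe_ennreal_toReal hn]

lemma eIntegral_coe_mono_ae {f g : ℝ → ℝ} (h : f ≤ᵐ[μ] g) :
    eIntegral μ (fun x => (f x : EReal)) ≤ eIntegral μ (fun x => (g x : EReal)) := by
  rw [eIntegral_coe, eIntegral_coe]
  refine EReal.sub_le_sub (EReal.coe_ennreal_le_coe_ennreal_iff.2 (lintegral_mono_ae ?_))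
    (EReal.coe_ennreal_le_coe_ennreal_iff.2 (lintegral_mono_ae ?_))
  · exact h.mono fun x hx => ENNReal.ofReal_le_ofReal hx
  · exact h.mono fun x hx => ENNReal.ofReal_le_ofReal (neg_le_neg hx)

/-- The positive parts converge by domination, the negative parts by monotone convergence,
possibly to `∞`. -/
lemma tendsto_eIntegral_coe_of_antitone {F : ℕ → ℝ → ℝ} {f : ℝ → ℝ}
    (hF : ∀ n, Measurable (F n)) (h_anti : ∀ᵐ x ∂μ, Antitone fun n => F n x)
    (h_lim : ∀ᵐ x ∂μ, Tendsto (fun n => F n x) atTop (𝓝 (f x)))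
    (h_fin : ∫⁻ x, ENNReal.ofReal (F 0 x) ∂μ ≠ ∞) :
    Tendsto (fun n => eIntegral μ (fun x => (F n x : EReal))) atTop
      (𝓝 (eIntegral μ (fun x => (f x : EReal)))) := by
  have hpos : Tendsto (fun n => ∫⁻ x, ENNReal.ofReal (F n x) ∂μ) atTop
      (𝓝 (∫⁻ x, ENNReal.ofReal (f x) ∂μ)) :=
    tendsto_lintegral_of_dominated_convergence _ (fun n => (hF n).ennreal_ofReal)
      (fun n => h_anti.mono fun x hx => ENNReal.ofReal_le_ofReal (hx (Nat.zero_le n))) h_fin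
      (h_lim.mono fun x hx => (ENNReal.continuous_ofReal.tendsto _).comp hx)
  have hneg : Tendsto (fun n => ∫⁻ x, ENNReal.ofReal (-F n x) ∂μ) atTop
      (𝓝 (∫⁻ x, ENNReal.ofReal (-f x) ∂μ)) :=
    lintegral_tendsto_of_tendsto_of_monotone (fun n => (hF n).neg.ennreal_ofReal.aemeasurable)
      (h_anti.mono fun x hx _ _ hmn => ENNReal.ofReal_le_ofReal (neg_le_neg (hx hmn)))
      (h_lim.mono fun x hx => (ENNReal.continuous_ofReal.tendsto _).comp hx.neg)
  have hfin : ∫⁻ x, ENNReal.ofReal (f x) ∂μ ≠ ∞ :=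
    ne_top_of_le_ne_top h_fin (le_of_tendsto' hpos fun n => lintegral_mono_ae
      (h_anti.mono fun x hx => ENNReal.ofReal_le_ofReal (hx (Nat.zero_le n))))
  simp only [eIntegral_coe]
  refine (EReal.continuousAt_add ?_ ?_).tendsto.comp
    ((continuous_coe_ennreal_ereal.tendsto _).comp hpos |>.prodMk_nhds
      ((continuous_coe_ennreal_ereal.tendsto _).comp hneg).neg)
  · simp [hfin]
  · simp

end eIntegral

lemma integrable_log_mul_add {μ : Measure ℝ} [IsFiniteMeasure μ] (hμ : ∀ᵐ x ∂μ, 0 ≤ x)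
    (hint : Integrable (fun x => log (1 + x)) μ) {a b : ℝ} (ha : 0 ≤ a) (hb : 0 < b) :
    Integrable (fun x => log (a * x + b)) μ := by
  set M := max a b
  have hM : 0 < M := hb.trans_le (le_max_right a b)
  refine integrable_of_le_of_le (g₁ := fun _ => log b) (g₂ := fun x => log M + log (1 + x))
    (measurable_log.comp (by fun_prop)).aestronglyMeasurable ?_ ?_ (integrable_const _)
    ((integrable_const _).add hint)
  · filter_upwards [hμ] with x hx
    exact log_le_log hb (by nlinarith)
  · filter_upwards [hμ] with x hx
    rw [← log_mul hM.ne' (by linarith)]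
    exact log_le_log (by positivity) (by nlinarith [le_max_left a b, le_max_right a b])

noncomputable def hsKernelReal (c x y : ℝ) : ℝ := log y + c⁻¹ * log (c * y⁻¹ * x + 1 - c)

section Kernel

variable {c x y : ℝ}

lemma hsKernel_eq_hsKernelReal (hc0 : 0 < c) (hc1 : c < 1) (hy : 0 < y) (hx : 0 ≤ x) :
    hsKernel c x y = hsKernelReal c x y := by
  have harg : 0 < c * y⁻¹ * x + 1 - c := by
    nlinarith [mul_nonneg (mul_nonneg hc0.le (inv_nonneg.2 hy.le)) hx]
  rw [hsKernel, if_neg hc0.ne', elogr, if_neg harg.not_ge, hsKernelReal, EReal.coe_add,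
    EReal.coe_mul]

lemma hsKernel_one_of_pos (hx : 0 < x) (hy : 0 < y) : hsKernel 1 x y = log x := by
  have harg : 1 * y⁻¹ * x + 1 - 1 = x / y := by field_simp; ring
  rw [hsKernel, if_neg one_ne_zero, harg, elogr, if_neg (div_pos hx hy).not_ge,
    log_div hx.ne' hy.ne', inv_one, EReal.coe_one, one_mul, ← EReal.coe_add, add_sub_cancel]

lemma integrable_hsKernelReal {μ : Measure ℝ} [IsFiniteMeasure μ] (hμ : ∀ᵐ x ∂μ, 0 ≤ x)
    (hint : Integrable (fun x => log (1 + x)) μ) (hc0 : 0 < c) (hc1 : c < 1) (hy : 0 < y) :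
    Integrable (fun x => hsKernelReal c x y) μ := by
  have h := integrable_log_mul_add hμ hint (a := c * y⁻¹) (b := 1 - c) (by positivity) (by linarith)
  simp only [hsKernelReal, add_sub_assoc]
  exact (integrable_const _).add (h.const_mul _)

lemma eIntegral_hsKernel {μ : Measure ℝ} [IsFiniteMeasure μ] (hμ : ∀ᵐ x ∂μ, 0 ≤ x)
    (hint : Integrable (fun x => log (1 + x)) μ) (hc0 : 0 < c) (hc1 : c < 1) (hy : 0 < y) :
    eIntegral μ (fun x => hsKernel c x y) = ((∫ x, hsKernelReal c x y ∂μ : ℝ) : EReal) := by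
  rw [eIntegral_congr_ae (hμ.mono fun x hx => hsKernel_eq_hsKernelReal hc0 hc1 hy hx)]
  exact eIntegral_coe_of_integrable (integrable_hsKernelReal hμ hint hc0 hc1 hy)

lemma hsB_pos (hc0 : 0 < c) (hc1 : c ≤ 1) : 0 < hsB c := by
  rcases hc1.lt_or_eq with hc1 | rfl
  · rw [hsB, if_neg hc0.ne', if_neg hc1.ne]
    exact mul_pos hc0 (rpow_pos_of_pos (by linarith) _)
  · simp [hsB]

lemma hsB_one : hsB 1 = 1 := by simp [hsB]

lemma log_hsB (hc0 : 0 < c) (hc1 : c < 1) : log (hsB c) = log c + (1 - c) / c * log (1 - c) := by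
  rw [hsB, if_neg hc0.ne', if_neg hc1.ne, log_mul hc0.ne' (rpow_pos_of_pos (by linarith) _).ne',
    log_rpow (by linarith)]

lemma hsKernelReal_eq_log_one_add (hc0 : 0 < c) (hc1 : c < 1) (hy : 0 < y) (hx : 0 ≤ x) :
    hsKernelReal c x y = log y + c⁻¹ * log (1 - c) + c⁻¹ * log (1 + c * x / ((1 - c) * y)) := by
  have h1c : 0 < 1 - c := by linarith
  have harg : c * y⁻¹ * x + 1 - c = (1 - c) * (1 + c * x / ((1 - c) * y)) := by
    field_simp
    ring
  rw [hsKernelReal, harg, log_mul h1c.ne' (by positivity)]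
  ring

lemma hsKernelReal_zero (c y : ℝ) : hsKernelReal c 0 y = log y + c⁻¹ * log (1 - c) := by
  simp [hsKernelReal]

lemma hsKernelReal_induce {p : ℝ} (hc0 : 0 < c) (hcp : c < p) (hp1 : p ≤ 1) (hy : 0 < y)
    (hx : 0 ≤ x) :
    (1 - p) * hsKernelReal c 0 y + p * hsKernelReal c x y =
      log (hsB c / hsB (c / p)) + hsKernelReal (c / p) x ((1 - c) / (p - c) * y) := by
  have hp : 0 < p := hc0.trans hcp
  have hc1 : c < 1 := hcp.trans_le hp1
  have h1c : 0 < 1 - c := by linarith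
  have hpc : 0 < p - c := by linarith
  have hc'0 : 0 < c / p := div_pos hc0 hp
  have hc'1 : c / p < 1 := (div_lt_one hp).2 hcp
  have hk : 0 < (1 - c) / (p - c) := div_pos h1c hpc
  have hscale : c / p * x / ((1 - c / p) * ((1 - c) / (p - c) * y)) = c * x / ((1 - c) * y) := by
    field_simp
  rw [hsKernelReal_zero, hsKernelReal_eq_log_one_add hc0 hc1 hy hx,
    hsKernelReal_eq_log_one_add hc'0 hc'1 (mul_pos hk hy) hx, hscale,
    log_div (hsB_pos hc0 hc1.le).ne' (hsB_pos hc'0 hc'1.le).ne', log_hsB hc0 hc1, log_hsB hc'0 hc'1,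
    log_mul hk.ne' hy.ne', log_div h1c.ne' hpc.ne', log_div hc0.ne' hp.ne', one_sub_div hp.ne',
    log_div hpc.ne' hp.ne']
  field_simp
  ring

lemma hsKernelReal_induce_one (hc0 : 0 < c) (hc1 : c < 1) (hy : 0 < y) (hx : 0 ≤ x) :
    (1 - c) * hsKernelReal c 0 y + c * hsKernelReal c x y =
      log (hsB c) + log (x + (1 - c) / c * y) := by
  have h1c : 0 < 1 - c := by linarith
  have hk : 0 < (1 - c) / c := div_pos h1c hc0
  have harg : 1 + c * x / ((1 - c) * y) = (x + (1 - c) / c * y) / ((1 - c) / c * y) := by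
    field_simp
    ring
  rw [hsKernelReal_zero, hsKernelReal_eq_log_one_add hc0 hc1 hy hx, harg,
    log_div (by positivity) (by positivity), log_mul hk.ne' hy.ne', log_div h1c.ne' hc0.ne',
    log_hsB hc0 hc1]
  field_simp
  ring

end Kernel

section Conditioning

variable {μ : Measure ℝ}

lemma integrable_cond {Ω : Type*} [MeasurableSpace Ω] {ν : Measure Ω} {f : Ω → ℝ}
    (hf : Integrable f ν) {s : Set Ω} (hs : ν s ≠ 0) : Integrable f ν[|s] :=
  hf.restrict.smul_measure (ENNReal.inv_ne_top.2 hs)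

lemma cond_eq_self {Ω : Type*} [MeasurableSpace Ω] {ν : Measure Ω} [IsProbabilityMeasure ν]
    {s : Set Ω} (hs : MeasurableSet s) (h : ν.real s = 1) : ν[|s] = ν := by
  have h1 : ν s = 1 := (ENNReal.toReal_eq_one_iff _).1 h
  rw [ProbabilityTheory.cond, h1, inv_one, one_smul,
    Measure.restrict_eq_self_of_ae_mem (mem_ae_iff.2 ((prob_compl_eq_zero_iff hs).2 h1))]

lemma integral_eq_atom_add_cond [IsFiniteMeasure μ] (hμ : ∀ᵐ x ∂μ, 0 ≤ x) {g : ℝ → ℝ}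
    (hg : Integrable g μ) :
    ∫ x, g x ∂μ = μ.real {0} * g 0 + μ.real (Ioi 0) * ∫ x, g x ∂μ[|Ioi 0] := by
  have hsplit : μ = μ.restrict {0} + μ.restrict (Ioi 0) := by
    rw [← Measure.restrict_union (by simp) (measurableSet_Ioi : MeasurableSet (Ioi (0 : ℝ))),
      singleton_union, Ioi_insert, Measure.restrict_eq_self_of_ae_mem (s := Ici 0) hμ]
  have hcond : μ.restrict (Ioi 0) = μ (Ioi 0) • μ[|Ioi 0] := by
    by_cases h0 : μ (Ioi 0) = 0
    · simp [h0]
    · rw [ProbabilityTheory.cond, smul_smul, ENNReal.mul_inv_cancel h0 (measure_ne_top _ _),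
        one_smul]
  conv_lhs => rw [hsplit]
  rw [integral_add_measure hg.restrict hg.restrict, Measure.restrict_singleton,
    integral_smul_measure, integral_dirac, hcond, integral_smul_measure]
  simp [measureReal_def]

lemma measureReal_singleton_zero_eq_one_sub [IsProbabilityMeasure μ] (hμ : ∀ᵐ x ∂μ, 0 ≤ x) :
    μ.real {0} = 1 - μ.real (Ioi 0) := by
  have hIci : μ.real (Ici 0) = 1 := by
    rw [measureReal_congr (ae_eq_univ.2 (mem_ae_iff.1 hμ) : Ici (0 : ℝ) =ᵐ[μ] univ),
      probReal_univ]
  rw [← hIci, ← Ioi_insert, ← singleton_union, measureReal_union (by simp) measurableSet_Ioi]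
  ring

lemma eIntegral_hsKernel_eq_integral_cond [IsProbabilityMeasure μ] (hμ : ∀ᵐ x ∂μ, 0 ≤ x)
    (hint : Integrable (fun x => log (1 + x)) μ) (hp : μ (Ioi 0) ≠ 0) {c y : ℝ} (hc0 : 0 < c)
    (hc1 : c < 1) (hy : 0 < y) :
    eIntegral μ (fun x => hsKernel c x y) =
      ((∫ x, ((1 - μ.real (Ioi 0)) * hsKernelReal c 0 y + μ.real (Ioi 0) * hsKernelReal c x y)
        ∂μ[|Ioi 0] : ℝ) : EReal) := by
  have := cond_isProbabilityMeasure (s := Ioi 0) hp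
  rw [eIntegral_hsKernel hμ hint hc0 hc1 hy,
    integral_eq_atom_add_cond hμ (integrable_hsKernelReal hμ hint hc0 hc1 hy),
    measureReal_singleton_zero_eq_one_sub hμ, integral_add (integrable_const _)
      ((integrable_cond (integrable_hsKernelReal hμ hint hc0 hc1 hy) hp).const_mul _)]
  simp [integral_const_mul]

end Conditioning

section Barycenter

variable {μ : Measure ℝ}

lemma hsBary_eq_of_eIntegral_hsKernel_eq {c D k : ℝ} {G : ℝ → EReal} (hk : 0 < k)
    (h : ∀ y, 0 < y → eIntegral μ (fun x => hsKernel c x y) = D + G (k * y)) :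
    hsBary c μ = ENNReal.ofReal (exp D) * eexp (⨅ y : {y : ℝ // 0 < y}, G y) := by
  rw [hsBary, iInf_congr fun y : {y : ℝ // 0 < y} => h y y.2, EReal.coe_add_iInf,
    iInf_pos_comp_mul hk G, eexp_coe_add]

lemma hsBary_one_of_ae_pos (hμ : ∀ᵐ x ∂μ, 0 < x) :
    hsBary 1 μ = eexp (eIntegral μ fun x => (log x : EReal)) := by
  rw [hsBary, iInf_congr fun y : {y : ℝ // 0 < y} =>
    eIntegral_congr_ae (hμ.mono fun x hx => hsKernel_one_of_pos hx y.2), iInf_const]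

lemma iInf_integral_log_add [IsFiniteMeasure μ] (hμ : ∀ᵐ x ∂μ, 0 < x)
    (hint : Integrable (fun x => log (1 + x)) μ) :
    ⨅ y : {y : ℝ // 0 < y}, ((∫ x, log (x + y) ∂μ : ℝ) : EReal) =
      eIntegral μ (fun x => (log x : EReal)) := by
  have hint_add : ∀ y : ℝ, 0 < y → Integrable (fun x => log (x + y)) μ := fun y hy => by
    simpa using integrable_log_mul_add (hμ.mono fun x hx => hx.le) hint zero_le_one hy
  rw [iInf_congr fun y : {y : ℝ // 0 < y} => (eIntegral_coe_of_integrable (hint_add y y.2)).symm]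
  refine le_antisymm ?_ (le_iInf fun y => eIntegral_coe_mono_ae
    (hμ.mono fun x hx => log_le_log hx (by linarith [y.2])))
  have hlim := tendsto_eIntegral_coe_of_antitone (μ := μ) (f := log)
    (F := fun n x => log (x + 1 / ((n : ℝ) + 1)))
    (fun n => measurable_log.comp (by fun_prop))
    (hμ.mono fun x hx m n hmn => log_le_log (by positivity) (by gcongr))
    (hμ.mono fun x hx => (continuousAt_log hx.ne').tendsto.comp
      (by simpa using tendsto_one_div_add_atTop_nhds_zero_nat.const_add x))
    (by simpa [add_comm] using hint.lintegral_lt_top.ne)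
  exact ge_of_tendsto hlim (Eventually.of_forall fun n =>
    iInf_le_of_le ⟨1 / ((n : ℝ) + 1), by positivity⟩ le_rfl)

lemma hsBary_eq_mul_hsBary_cond_of_lt [IsProbabilityMeasure μ] (hμ : ∀ᵐ x ∂μ, 0 ≤ x)
    (hint : Integrable (fun x => log (1 + x)) μ) {c : ℝ} (hc0 : 0 < c)
    (hcp : c < μ.real (Ioi 0)) :
    hsBary c μ = ENNReal.ofReal (hsB c / hsB (c / μ.real (Ioi 0))) *
      hsBary (c / μ.real (Ioi 0)) μ[|Ioi 0] := by
  set p := μ.real (Ioi 0)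
  have hp : 0 < p := hc0.trans hcp
  have hp1 : p ≤ 1 := measureReal_le_one
  have hc1 : c < 1 := hcp.trans_le hp1
  have hc'0 : 0 < c / p := div_pos hc0 hp
  have hc'1 : c / p < 1 := (div_lt_one hp).2 hcp
  have hk : 0 < (1 - c) / (p - c) := div_pos (by linarith) (by linarith)
  have hμp : μ (Ioi 0) ≠ 0 := (measureReal_ne_zero_iff).1 hp.ne'
  have := cond_isProbabilityMeasure (s := Ioi 0) hμp
  have hν : ∀ᵐ x ∂μ[|Ioi 0], 0 < x := ae_cond_mem measurableSet_Ioi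
  have hνint := integrable_cond hint hμp
  rw [hsBary_eq_of_eIntegral_hsKernel_eq (D := log (hsB c / hsB (c / p)))
    (G := fun y => eIntegral μ[|Ioi 0] fun x => hsKernel (c / p) x y) hk,
    exp_log (div_pos (hsB_pos hc0 hc1.le) (hsB_pos hc'0 hc'1.le))]
  · rfl
  intro y hy
  rw [eIntegral_hsKernel_eq_integral_cond hμ hint hμp hc0 hc1 hy,
    integral_congr_ae (hν.mono fun x hx => hsKernelReal_induce hc0 hcp hp1 hy hx.le),
    eIntegral_hsKernel (hν.mono fun x hx => hx.le) hνint hc'0 hc'1 (mul_pos hk hy),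
    integral_add (integrable_const _)
      (integrable_hsKernelReal (hν.mono fun x hx => hx.le) hνint hc'0 hc'1 (mul_pos hk hy))]
  simp

lemma hsBary_eq_mul_hsBary_one_cond [IsProbabilityMeasure μ] (hμ : ∀ᵐ x ∂μ, 0 ≤ x)
    (hint : Integrable (fun x => log (1 + x)) μ) (hp0 : 0 < μ.real (Ioi 0))
    (hp1 : μ.real (Ioi 0) < 1) :
    hsBary (μ.real (Ioi 0)) μ = ENNReal.ofReal (hsB (μ.real (Ioi 0))) * hsBary 1 μ[|Ioi 0] := by
  set p := μ.real (Ioi 0)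
  have hk : 0 < (1 - p) / p := div_pos (by linarith) hp0
  have hμp : μ (Ioi 0) ≠ 0 := (measureReal_ne_zero_iff).1 hp0.ne'
  have := cond_isProbabilityMeasure (s := Ioi 0) hμp
  have hν : ∀ᵐ x ∂μ[|Ioi 0], 0 < x := ae_cond_mem measurableSet_Ioi
  have hνint := integrable_cond hint hμp
  have hint_add : ∀ y, 0 < y → Integrable (fun x => log (x + (1 - p) / p * y)) μ[|Ioi 0] :=
    fun y hy => by
      simpa using integrable_log_mul_add (hν.mono fun x hx => hx.le) hνint zero_le_one
        (mul_pos hk hy)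
  rw [hsBary_eq_of_eIntegral_hsKernel_eq (D := log (hsB p))
    (G := fun y => ((∫ x, log (x + y) ∂μ[|Ioi 0] : ℝ) : EReal)) hk,
    exp_log (hsB_pos hp0 hp1.le), iInf_integral_log_add hν hνint, hsBary_one_of_ae_pos hν]
  intro y hy
  rw [eIntegral_hsKernel_eq_integral_cond hμ hint hμp hp0 hp1 hy,
    integral_congr_ae (hν.mono fun x hx => hsKernelReal_induce_one hp0 hp1 hy hx.le),
    integral_add (integrable_const _) (hint_add y hy)]
  simp

end Barycenter

/-- if `c ∈ (0,1]` and `c ≤ p := 1 - μ({0})`, then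
`[μ]_c = (B(c)/B(c/p)) · [μ⁺]_{c/p}`. -/
theorem hsBary_induce (μ : Measure ℝ) [IsProbabilityMeasure μ]
    (hsupp : μ (Set.Iio 0) = 0) (hint : Integrable (fun x => Real.log (1 + x)) μ)
    (c : ℝ) (hc : c ∈ Set.Ioc (0 : ℝ) 1) (hcp : c ≤ 1 - (μ {0}).toReal) :
    hsBary c μ =
      ENNReal.ofReal (hsB c / hsB (c / (1 - (μ {0}).toReal))) *
        hsBary (c / (1 - (μ {0}).toReal)) ((μ (Set.Ioi 0))⁻¹ • μ.restrict (Set.Ioi 0)) := by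
  obtain ⟨hc0, hc1⟩ := hc
  have hμ : ∀ᵐ x ∂μ, 0 ≤ x := by
    rw [ae_iff]
    simp only [not_le]
    exact hsupp
  have hp : 1 - (μ {0}).toReal = μ.real (Ioi 0) := by
    rw [← measureReal_def, measureReal_singleton_zero_eq_one_sub hμ, sub_sub_cancel]
  change hsBary c μ = _ * hsBary _ μ[|Ioi 0]
  rw [hp] at hcp ⊢
  rcases hcp.lt_or_eq with hlt | rfl
  · exact hsBary_eq_mul_hsBary_cond_of_lt hμ hint hc0 hlt
  rcases hc1.lt_or_eq with hlt | hp1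
  · rw [div_self hc0.ne', hsBary_eq_mul_hsBary_one_cond hμ hint hc0 hlt, hsB_one, div_one]
  · rw [cond_eq_self measurableSet_Ioi hp1, hp1, div_one, hsB_one, div_one, ENNReal.ofReal_one,
      one_mul]
end

section
/- Let μ ≠ δ₀ be a Borel probability measure on [0,∞) with ∫ log(1+x) dμ(x) < ∞. Then the function c ↦ [μ]_c^c is log-concave on [0,1]; equivalently, the function g(c) := c · log [μ]_c (with g(0) := 0, values in [−∞,+∞)) is concave on [0,1]. -/
open MeasureTheory Filter Topology
open scoped ENNReal

/-- Logarithm on `[0,∞]`, with values in `EReal`. -/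
noncomputable def elog (x : ℝ≥0∞) : EReal :=
  if x = 0 then ⊥ else if x = ⊤ then ⊤ else ((Real.log x.toReal : ℝ) : EReal)

/-! For `c > 0`, `c · log [μ]_c` is the infimum over `y > 0` of `∫ c · K(x, y, c) dμ(x)`, and
`c · K(x, y, c) = c log y + log (1 + c (x / y - 1))`; this expression vanishes at `c = 0`, so the
same formula holds there. For fixed `x, y` it is concave in `c`: a linear term plus the logarithm
of an affine function. Since `c · K(x, y, c) ≤ log (1 + x) + C(y)` for `c ∈ [0, 1]`, its positive
part is integrable, so integrating against `μ` preserves the concavity inequality; an infimum of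
concave functions is concave. -/
open scoped NNReal

lemma eexp_eq_exp : eexp = EReal.exp := by
  ext1 x; induction x <;> simp [eexp]

lemma elog_eexp (x : EReal) : elog (eexp x) = x := by
  rw [eexp_eq_exp]; exact EReal.log_exp x

namespace EReal

lemma coe_mul_coe_inv_mul {a : ℝ} (ha : a ≠ 0) (x : EReal) :
    (a : EReal) * ((a⁻¹ : ℝ) * x) = x := by
  rw [← mul_assoc, ← coe_mul, mul_inv_cancel₀ ha, coe_one, one_mul]

lemma coe_mul_iInf {ι : Sort*} {a : ℝ} (ha : 0 < a) (f : ι → EReal) :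
    (a : EReal) * (⨅ i, f i) = ⨅ i, (a : EReal) * f i := by
  have hmono {b : ℝ} (hb : 0 ≤ b) : Monotone fun x : EReal => (b : EReal) * x :=
    fun _ _ h => mul_le_mul_of_nonneg_left h (EReal.coe_nonneg.2 hb)
  refine le_antisymm (le_iInf fun i => hmono ha.le (iInf_le f i)) ?_
  calc ⨅ i, (a : EReal) * f i = a * ((a⁻¹ : ℝ) * ⨅ i, (a : EReal) * f i) :=
        (coe_mul_coe_inv_mul ha.ne' _).symm
    _ ≤ a * ⨅ i, f i := hmono ha.le <| le_iInf fun i =>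
        (hmono (inv_nonneg.2 ha.le) (iInf_le _ i)).trans_eq <| by
          simpa using coe_mul_coe_inv_mul (inv_ne_zero ha.ne') (f i)

lemma coe_mul_iInf_add_coe_mul_iInf_le {ι : Sort*} {s u : ℝ} (hs : 0 ≤ s) (hu : 0 ≤ u)
    {f g h : ι → EReal} (hle : ∀ i, (s : EReal) * f i + u * g i ≤ h i) :
    (s : EReal) * (⨅ i, f i) + u * ⨅ i, g i ≤ ⨅ i, h i :=
  le_iInf fun i => (add_le_add (mul_le_mul_of_nonneg_left (iInf_le f i) (EReal.coe_nonneg.2 hs))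
    (mul_le_mul_of_nonneg_left (iInf_le g i) (EReal.coe_nonneg.2 hu))).trans (hle i)

lemma toENNReal_add_add_toENNReal_neg (a b : EReal) :
    a.toENNReal + b.toENNReal + (-(a + b)).toENNReal =
      (a + b).toENNReal + (-a).toENNReal + (-b).toENNReal := by
  induction a <;> induction b
  case coe.coe p q =>
    rw [← coe_add, ← coe_neg, ← coe_neg, ← coe_neg]
    simp only [real_coe_toENNReal]
    refine (ENNReal.toReal_eq_toReal_iff' (by finiteness) (by finiteness)).1 ?_
    simp only [ENNReal.toReal_add, ENNReal.ofReal_ne_top, ENNReal.add_ne_top, ne_eq,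
      not_false_eq_true, and_self, ENNReal.toReal_ofReal']
    linarith [max_zero_sub_eq_self p, max_zero_sub_eq_self q, max_zero_sub_eq_self (p + q)]
  all_goals simp

lemma coe_sub_add_coe_sub_le {P₁ P₂ P N₁ N₂ N : ℝ≥0∞} (hP₁ : P₁ ≠ ⊤) (hP₂ : P₂ ≠ ⊤)
    (hP : P ≠ ⊤) (h : P₁ + P₂ + N = P + N₁ + N₂) :
    ((P₁ : EReal) - N₁) + ((P₂ : EReal) - N₂) ≤ (P : EReal) - N := by
  by_cases hN₁ : N₁ = ⊤
  · simp [hN₁]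
  by_cases hN₂ : N₂ = ⊤
  · simp [hN₂]
  have hN : N ≠ ⊤ := by
    rintro rfl
    simp [hP, hN₁, hN₂, eq_comm] at h
  lift P₁ to ℝ≥0 using hP₁
  lift P₂ to ℝ≥0 using hP₂
  lift P to ℝ≥0 using hP
  lift N₁ to ℝ≥0 using hN₁
  lift N₂ to ℝ≥0 using hN₂
  lift N to ℝ≥0 using hN
  have h' := congrArg NNReal.toReal (by exact_mod_cast h : P₁ + P₂ + N = P + N₁ + N₂)
  simp only [coe_nnreal_eq_coe_real]
  norm_cast
  push_cast at h'
  linarith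

end EReal

section eIntegral

variable {μ : Measure ℝ}

lemma eIntegral_eq (f : ℝ → EReal) : eIntegral μ f =
    ((∫⁻ x, (f x).toENNReal ∂μ : ℝ≥0∞) : EReal) - ((∫⁻ x, (-f x).toENNReal ∂μ : ℝ≥0∞) : EReal) :=
  rfl

lemma eIntegral_zero : eIntegral μ (fun _ => 0) = 0 := by
  simp [eIntegral_eq]

lemma eIntegral_mono {f g : ℝ → EReal} (h : ∀ x, f x ≤ g x) : eIntegral μ f ≤ eIntegral μ g :=
  EReal.sub_le_sub
    (EReal.coe_ennreal_le_coe_ennreal_iff.2 (lintegral_mono fun x =>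
      EReal.toENNReal_le_toENNReal (h x)))
    (EReal.coe_ennreal_le_coe_ennreal_iff.2 (lintegral_mono fun x =>
      EReal.toENNReal_le_toENNReal (EReal.neg_le_neg_iff.2 (h x))))

lemma lintegral_toENNReal_const_mul {a : ℝ} (ha : 0 ≤ a) (f : ℝ → EReal) :
    ∫⁻ x, ((a : EReal) * f x).toENNReal ∂μ = ENNReal.ofReal a * ∫⁻ x, (f x).toENNReal ∂μ := by
  simp_rw [EReal.toENNReal_mul (EReal.coe_nonneg.2 ha)]
  exact lintegral_const_mul' _ _ ENNReal.ofReal_ne_top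

lemma eIntegral_const_mul {a : ℝ} (ha : 0 ≤ a) (f : ℝ → EReal) :
    eIntegral μ (fun x => (a : EReal) * f x) = a * eIntegral μ f := by
  simp_rw [eIntegral_eq, ← mul_neg, lintegral_toENNReal_const_mul ha, EReal.coe_ennreal_mul,
    EReal.coe_ennreal_ofReal, max_eq_left ha]
  exact (EReal.mul_sub_of_nonneg_of_ne_top (EReal.coe_nonneg.2 ha) (EReal.coe_ne_top a)).symm

lemma le_eIntegral_add {f g : ℝ → EReal} (hf : Measurable f) (hg : Measurable g)
    (hf' : ∫⁻ x, (f x).toENNReal ∂μ ≠ ⊤) (hg' : ∫⁻ x, (g x).toENNReal ∂μ ≠ ⊤) :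
    eIntegral μ f + eIntegral μ g ≤ eIntegral μ (fun x => f x + g x) := by
  have hfp : Measurable fun x => (f x).toENNReal := measurable_ereal_toENNReal.comp hf
  have hgp : Measurable fun x => (g x).toENNReal := measurable_ereal_toENNReal.comp hg
  have hfn : Measurable fun x => (-f x).toENNReal := measurable_ereal_toENNReal.comp hf.neg
  have hgn : Measurable fun x => (-g x).toENNReal := measurable_ereal_toENNReal.comp hg.neg
  simp only [eIntegral_eq]
  refine EReal.coe_sub_add_coe_sub_le hf' hg' ?_ ?_
  · refine ne_top_of_le_ne_top ?_ (lintegral_mono fun x => EReal.toENNReal_add_le)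
    rw [lintegral_add_left hfp]
    exact ENNReal.add_ne_top.2 ⟨hf', hg'⟩
  · have hfgp : Measurable fun x => (f x).toENNReal + (g x).toENNReal := hfp.add hgp
    rw [← lintegral_add_left hfp, ← lintegral_add_left hfgp, ← lintegral_add_right _ hfn,
      ← lintegral_add_right _ hgn]
    exact lintegral_congr fun x => EReal.toENNReal_add_add_toENNReal_neg (f x) (g x)

lemma coe_mul_eIntegral_add_coe_mul_eIntegral_le {s u : ℝ} (hs : 0 ≤ s) (hu : 0 ≤ u)
    {f g h : ℝ → EReal} (hf : Measurable f) (hg : Measurable g)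
    (hf' : ∫⁻ x, (f x).toENNReal ∂μ ≠ ⊤) (hg' : ∫⁻ x, (g x).toENNReal ∂μ ≠ ⊤)
    (hle : ∀ x, (s : EReal) * f x + u * g x ≤ h x) :
    (s : EReal) * eIntegral μ f + u * eIntegral μ g ≤ eIntegral μ h := by
  rw [← eIntegral_const_mul hs, ← eIntegral_const_mul hu]
  refine (le_eIntegral_add (hf.const_mul _) (hg.const_mul _) ?_ ?_).trans (eIntegral_mono hle)
  · rw [lintegral_toENNReal_const_mul hs]
    exact ENNReal.mul_ne_top ENNReal.ofReal_ne_top hf'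
  · rw [lintegral_toENNReal_const_mul hu]
    exact ENNReal.mul_ne_top ENNReal.ofReal_ne_top hg'

end eIntegral

lemma measurable_elogr : Measurable elogr :=
  Measurable.ite measurableSet_Iic measurable_const
    (measurable_coe_real_ereal.comp Real.measurable_log)

lemma coe_mul_elogr_add_coe_mul_elogr_le {s u : ℝ} (hs : 0 ≤ s) (hu : 0 ≤ u) (hsu : s + u = 1)
    (a b : ℝ) : (s : EReal) * elogr a + u * elogr b ≤ elogr (s * a + u * b) := by
  rcases hs.eq_or_lt with rfl | hs
  · obtain rfl : u = 1 := by linarith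
    simp
  rcases hu.eq_or_lt with rfl | hu
  · obtain rfl : s = 1 := by linarith
    simp
  rcases le_or_gt a 0 with ha | ha
  · simp [elogr, ha, EReal.coe_mul_bot_of_pos hs]
  rcases le_or_gt b 0 with hb | hb
  · simp [elogr, hb, EReal.coe_mul_bot_of_pos hu]
  have hab : 0 < s * a + u * b := by positivity
  simp only [elogr, not_le.2 ha, not_le.2 hb, not_le.2 hab, if_false]
  norm_cast
  simpa using strictConcaveOn_log_Ioi.concaveOn.2 ha hb hs.le hu.le hsu

noncomputable def scaledKernel (c x y : ℝ) : EReal :=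
  ((c * Real.log y : ℝ) : EReal) + elogr (1 + c * (y⁻¹ * x - 1))

lemma scaledKernel_zero_left (x y : ℝ) : scaledKernel 0 x y = 0 := by
  simp [scaledKernel, elogr]

lemma coe_mul_hsKernel {c : ℝ} (hc : 0 < c) (x y : ℝ) :
    (c : EReal) * hsKernel c x y = scaledKernel c x y := by
  rw [hsKernel, if_neg hc.ne', EReal.left_distrib_of_nonneg_of_ne_top (EReal.coe_nonneg.2 hc.le)
    (EReal.coe_ne_top c), ← EReal.coe_mul, EReal.coe_mul_coe_inv_mul hc.ne', scaledKernel]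
  congr 2
  ring

lemma measurable_scaledKernel (c y : ℝ) : Measurable fun x => scaledKernel c x y :=
  measurable_const.add (measurable_elogr.comp (by fun_prop))

lemma coe_mul_scaledKernel_add_coe_mul_scaledKernel_le {s u : ℝ} (hs : 0 ≤ s) (hu : 0 ≤ u)
    (hsu : s + u = 1) (c₁ c₂ x y : ℝ) :
    (s : EReal) * scaledKernel c₁ x y + u * scaledKernel c₂ x y ≤
      scaledKernel (s * c₁ + u * c₂) x y := by
  simp only [scaledKernel,
    EReal.left_distrib_of_nonneg_of_ne_top (EReal.coe_nonneg.2 hs) (EReal.coe_ne_top s),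
    EReal.left_distrib_of_nonneg_of_ne_top (EReal.coe_nonneg.2 hu) (EReal.coe_ne_top u)]
  rw [add_add_add_comm, ← EReal.coe_mul, ← EReal.coe_mul, ← EReal.coe_add]
  have harg : 1 + (s * c₁ + u * c₂) * (y⁻¹ * x - 1) =
      s * (1 + c₁ * (y⁻¹ * x - 1)) + u * (1 + c₂ * (y⁻¹ * x - 1)) := by
    linear_combination -hsu
  rw [harg]
  exact add_le_add (le_of_eq (by congr 1; ring)) (coe_mul_elogr_add_coe_mul_elogr_le hs hu hsu _ _)

lemma scaledKernel_le {c x y : ℝ} (hc₀ : 0 ≤ c) (hc₁ : c ≤ 1) (hx : 0 ≤ x) (hy : 0 < y) :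
    scaledKernel c x y ≤
      ((Real.log (1 + x) + (|Real.log y| + Real.log (1 + y⁻¹)) : ℝ) : EReal) := by
  rw [scaledKernel, elogr]
  split_ifs with harg
  · simp
  rw [← EReal.coe_add, EReal.coe_le_coe_iff]
  have hlog : c * Real.log y ≤ |Real.log y| := by
    nlinarith [mul_le_mul_of_nonneg_left (le_abs_self (Real.log y)) hc₀, abs_nonneg (Real.log y)]
  have hy' : 0 < y⁻¹ := inv_pos.2 hy
  have hbound : 1 + c * (y⁻¹ * x - 1) ≤ (1 + x) * (1 + y⁻¹) := by
    nlinarith [mul_nonneg hy'.le hx, mul_nonneg (mul_nonneg hc₀ hy'.le) hx]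
  have := Real.log_le_log (not_le.1 harg) hbound
  rw [Real.log_mul (by positivity) (by positivity)] at this
  linarith

lemma lintegral_toENNReal_scaledKernel_ne_top {μ : Measure ℝ} [IsFiniteMeasure μ]
    (hsupp : μ (Set.Iio 0) = 0) (hint : Integrable (fun x => Real.log (1 + x)) μ) {c y : ℝ}
    (hc₀ : 0 ≤ c) (hc₁ : c ≤ 1) (hy : 0 < y) :
    ∫⁻ x, (scaledKernel c x y).toENNReal ∂μ ≠ ⊤ := by
  have hx : ∀ᵐ x ∂μ, 0 ≤ x := by
    rw [ae_iff]
    simp only [not_le]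
    exact hsupp
  refine ne_top_of_le_ne_top
    (hint.add (integrable_const (|Real.log y| + Real.log (1 + y⁻¹)))).lintegral_lt_top.ne
    (lintegral_mono_ae ?_)
  filter_upwards [hx] with x hx
  exact EReal.toENNReal_le_toENNReal (scaledKernel_le hc₀ hc₁ hx hy)

lemma coe_mul_elog_hsBary (μ : Measure ℝ) {c : ℝ} (hc : 0 ≤ c) :
    (c : EReal) * elog (hsBary c μ) =
      ⨅ y : {y : ℝ // 0 < y}, eIntegral μ (fun x => scaledKernel c x y) := by
  rcases hc.eq_or_lt with rfl | hc
  · have : Nonempty {y : ℝ // 0 < y} := ⟨⟨1, one_pos⟩⟩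
    simp [scaledKernel_zero_left, eIntegral_zero]
  · simp_rw [hsBary, elog_eexp, EReal.coe_mul_iInf hc, ← eIntegral_const_mul hc.le,
      coe_mul_hsKernel hc]

theorem hsBary_logConcave_parameter_general (μ : Measure ℝ) [IsProbabilityMeasure μ]
    (hsupp : μ (Set.Iio 0) = 0) (hint : Integrable (fun x => Real.log (1 + x)) μ) :
    ∀ c₁ ∈ Set.Icc (0 : ℝ) 1, ∀ c₂ ∈ Set.Icc (0 : ℝ) 1, ∀ t ∈ Set.Icc (0 : ℝ) 1,
      (((1 - t : ℝ)) : EReal) * (((c₁ : ℝ) : EReal) * elog (hsBary c₁ μ)) +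
          ((t : ℝ) : EReal) * (((c₂ : ℝ) : EReal) * elog (hsBary c₂ μ)) ≤
        ((((1 - t) * c₁ + t * c₂ : ℝ)) : EReal) *
          elog (hsBary ((1 - t) * c₁ + t * c₂) μ) := by
  intro c₁ hc₁ c₂ hc₂ t ht
  have hs : 0 ≤ 1 - t := sub_nonneg.2 ht.2
  have hc : 0 ≤ (1 - t) * c₁ + t * c₂ := add_nonneg (mul_nonneg hs hc₁.1) (mul_nonneg ht.1 hc₂.1)
  rw [coe_mul_elog_hsBary μ hc₁.1, coe_mul_elog_hsBary μ hc₂.1, coe_mul_elog_hsBary μ hc]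
  refine EReal.coe_mul_iInf_add_coe_mul_iInf_le hs ht.1 fun y => ?_
  exact coe_mul_eIntegral_add_coe_mul_eIntegral_le hs ht.1
    (measurable_scaledKernel _ _) (measurable_scaledKernel _ _)
    (lintegral_toENNReal_scaledKernel_ne_top hsupp hint hc₁.1 hc₁.2 y.2)
    (lintegral_toENNReal_scaledKernel_ne_top hsupp hint hc₂.1 hc₂.2 y.2)
    fun x => coe_mul_scaledKernel_add_coe_mul_scaledKernel_le hs ht.1 (by ring) c₁ c₂ x y

/-- for `μ ≠ δ₀`, the function `c ↦ c·log [μ]_c` is concave on `[0,1]`. -/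
theorem hsBary_logConcave_parameter (μ : Measure ℝ) [IsProbabilityMeasure μ]
    (hsupp : μ (Set.Iio 0) = 0) (hint : Integrable (fun x => Real.log (1 + x)) μ)
    (hne : μ ≠ MeasureTheory.Measure.dirac 0) :
    ∀ c₁ ∈ Set.Icc (0 : ℝ) 1, ∀ c₂ ∈ Set.Icc (0 : ℝ) 1, ∀ t ∈ Set.Icc (0 : ℝ) 1,
      (((1 - t : ℝ)) : EReal) * (((c₁ : ℝ) : EReal) * elog (hsBary c₁ μ)) +
          ((t : ℝ) : EReal) * (((c₂ : ℝ) : EReal) * elog (hsBary c₂ μ)) ≤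
        ((((1 - t) * c₁ + t * c₂ : ℝ)) : EReal) *
          elog (hsBary ((1 - t) * c₁ + t * c₂) μ) :=
  hsBary_logConcave_parameter_general μ hsupp hint
end
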